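/- arXiv:1910.09319 — 2 statements merged into one kernel-verified Lean document; each statement's English description precedes it below -/
import Mathlib

section
/- Let {X_k, k ∈ ℕ} be a standardized Gaussian process with dependence measure Δ(n) = 2·Σ_{i<j≤n} |Cov(X_i, X_j)|, and let D_n = sup_t |F̂_n(t) − E[F̂_n(t)]|. If for every ε > 0 the series Σ_{i=1}^∞ P(D_{⌊γ^i⌋} > ε) converges for all γ > 1, then D_n → 0 almost surely; in particular, the sufficient condition Σ_{i=1}^∞ ((⌊γ^i⌋ + Δ(⌊γ^i⌋))/⌊γ^i⌋²)^{1/3} < ∞ for all γ > 1 is equivalent to Σ_{i=1}^∞ (Δ(⌊γ^i⌋)/⌊γ^i⌋²)^{1/3} < ∞ for all γ > 1. -/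
open MeasureTheory ProbabilityTheory Filter

/-- The cumulative distribution function `Φ` of the standard Gaussian. -/
noncomputable def stdGaussianCDF (x : ℝ) : ℝ := ((gaussianReal 0 1) (Set.Iic x)).toReal

/-- The empirical distribution `F̂ₙ(t) = (1/n) ∑_{i=1}^n 1(Φ(Xᵢ) ≤ t)`. -/
noncomputable def empDist {Ω : Type*} (X : ℕ → Ω → ℝ) (n : ℕ) (t : ℝ) (ω : Ω) : ℝ :=
  (1 / (n : ℝ)) * ∑ i ∈ Finset.range n, if stdGaussianCDF (X i ω) ≤ t then 1 else 0

/-- `Dₙ(ω) = sup_t |F̂ₙ(t) - E F̂ₙ(t)|`. -/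
noncomputable def empSup {Ω : Type*} [MeasurableSpace Ω] (P : Measure Ω) (X : ℕ → Ω → ℝ)
    (n : ℕ) (ω : Ω) : ℝ :=
  ⨆ t : ℝ, |empDist X n t ω - ∫ ω', empDist X n t ω' ∂P|

/-- The dependence measure `Δ(n) = 2 ∑_{i<j≤n} |Cov(Xᵢ, Xⱼ)|`. -/
noncomputable def depMeasure {Ω : Type*} [MeasurableSpace Ω] (P : Measure Ω) (X : ℕ → Ω → ℝ)
    (n : ℕ) : ℝ :=
  2 * ∑ j ∈ Finset.range n, ∑ i ∈ Finset.range j,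
    |(∫ ω, X i ω * X j ω ∂P) - (∫ ω, X i ω ∂P) * (∫ ω, X j ω ∂P)|

/-- A standardized Gaussian process: every finite linear combination of the `X k` is
Gaussian (i.e. all finite subcollections are jointly multivariate Gaussian) and each
marginal is standard Gaussian `N(0,1)`. -/
def IsStdGaussianProcess {Ω : Type*} [MeasurableSpace Ω] (P : Measure Ω)
    (X : ℕ → Ω → ℝ) : Prop :=
  (∀ k, Measurable (X k)) ∧ (∀ k, P.map (X k) = gaussianReal 0 1) ∧
  ∀ (s : Finset ℕ) (a : ℕ → ℝ), ∃ (m : ℝ) (v : NNReal),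
    P.map (fun ω => ∑ k ∈ s, a k * X k ω) = gaussianReal m v

section Aux

/-- The distribution function `t ↦ P(Φ(X) ≤ t)` for `X ~ N(0,1)`. -/
noncomputable def gcdf (t : ℝ) : ℝ := ((gaussianReal 0 1) {x : ℝ | stdGaussianCDF x ≤ t}).toReal

lemma stdGaussianCDF_monotone : Monotone stdGaussianCDF := fun x y hxy => by
  unfold stdGaussianCDF
  exact ENNReal.toReal_mono (measure_ne_top _ _) (measure_mono (Set.Iic_subset_Iic.mpr hxy))

lemma measurableSet_cdf_le (t : ℝ) : MeasurableSet {x : ℝ | stdGaussianCDF x ≤ t} :=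
  stdGaussianCDF_monotone.measurable measurableSet_Iic

lemma gcdf_nonneg (t : ℝ) : 0 ≤ gcdf t := ENNReal.toReal_nonneg

lemma gcdf_le_one (t : ℝ) : gcdf t ≤ 1 := by
  have h : (gaussianReal 0 1) {x : ℝ | stdGaussianCDF x ≤ t} ≤ 1 := prob_le_one
  simpa [gcdf] using ENNReal.toReal_mono ENNReal.one_ne_top h

variable {Ω : Type*} [MeasurableSpace Ω] (P : Measure Ω) [IsProbabilityMeasure P]
  (X : ℕ → Ω → ℝ)

lemma integral_empDist (hX : IsStdGaussianProcess P X) (t : ℝ) {n : ℕ} (hn : 1 ≤ n) :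
    ∫ ω, empDist X n t ω ∂P = gcdf t := by
  have heq : ∀ i : ℕ, (fun ω => if stdGaussianCDF (X i ω) ≤ t then (1:ℝ) else 0)
      = Set.indicator (X i ⁻¹' {x | stdGaussianCDF x ≤ t}) (fun _ => (1:ℝ)) := by
    intro i
    ext ω
    simp [Set.indicator_apply, Set.mem_preimage, Set.mem_setOf_eq]
  have hI : ∀ i : ℕ, Integrable (fun ω => if stdGaussianCDF (X i ω) ≤ t then (1:ℝ) else 0) P := by
    intro i
    rw [heq i]
    exact (integrable_const (1:ℝ)).indicator (hX.1 i (measurableSet_cdf_le t))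
  have hint : ∀ i : ℕ, ∫ ω, (if stdGaussianCDF (X i ω) ≤ t then (1:ℝ) else 0) ∂P = gcdf t := by
    intro i
    rw [heq i, integral_indicator_const (1:ℝ) (hX.1 i (measurableSet_cdf_le t)), smul_eq_mul,
      mul_one, measureReal_def, ← Measure.map_apply (hX.1 i) (measurableSet_cdf_le t), hX.2.1 i]
    rfl
  unfold empDist
  rw [integral_const_mul, integral_finset_sum _ (fun i _ => hI i),
    Finset.sum_congr rfl (fun i _ => hint i), Finset.sum_const, Finset.card_range, nsmul_eq_mul]
  have hn0 : (n : ℝ) ≠ 0 := by positivity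
  field_simp

lemma empDist_nonneg (n : ℕ) (t : ℝ) (ω : Ω) : 0 ≤ empDist X n t ω := by
  unfold empDist
  apply mul_nonneg (by positivity)
  exact Finset.sum_nonneg fun i _ => by split <;> norm_num

lemma empDist_le_one (n : ℕ) (t : ℝ) (ω : Ω) : empDist X n t ω ≤ 1 := by
  unfold empDist
  rcases Nat.eq_zero_or_pos n with rfl | hn
  · simp
  have hsum : (∑ i ∈ Finset.range n, if stdGaussianCDF (X i ω) ≤ t then (1:ℝ) else 0) ≤ n := by
    calc (∑ i ∈ Finset.range n, if stdGaussianCDF (X i ω) ≤ t then (1:ℝ) else 0)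
        ≤ ∑ i ∈ Finset.range n, (1:ℝ) := by
          apply Finset.sum_le_sum
          intro i _
          split <;> norm_num
      _ = n := by simp
  have hn0 : (0:ℝ) < n := by positivity
  calc (1/(n:ℝ)) * (∑ i ∈ Finset.range n, if stdGaussianCDF (X i ω) ≤ t then (1:ℝ) else 0)
      ≤ (1/(n:ℝ)) * n := by
        apply mul_le_mul_of_nonneg_left hsum
        positivity
    _ = 1 := by field_simp

lemma count_mono {m n : ℕ} (hm : 1 ≤ m) (hmn : m ≤ n) (t : ℝ) (ω : Ω) :
    (m:ℝ) * empDist X m t ω ≤ (n:ℝ) * empDist X n t ω := by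
  have hn : 1 ≤ n := hm.trans hmn
  have key : ∀ k : ℕ, 1 ≤ k → (k:ℝ) * empDist X k t ω
      = ∑ i ∈ Finset.range k, if stdGaussianCDF (X i ω) ≤ t then (1:ℝ) else 0 := by
    intro k hk
    unfold empDist
    have hk0 : (k:ℝ) ≠ 0 := by positivity
    field_simp
  rw [key m hm, key n hn]
  apply Finset.sum_le_sum_of_subset_of_nonneg (Finset.range_subset_range.mpr hmn)
  intro i _ _
  split <;> norm_num

lemma abs_empDist_sub_le_one (n : ℕ) (t : ℝ) (ω : Ω) : |empDist X n t ω - gcdf t| ≤ 1 := by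
  rw [abs_le]
  constructor
  · linarith [empDist_nonneg X n t ω, gcdf_le_one t]
  · linarith [empDist_le_one X n t ω, gcdf_nonneg t]

lemma bddAbove_empDist (n : ℕ) (ω : Ω) :
    BddAbove (Set.range fun t => |empDist X n t ω - gcdf t|) := by
  refine ⟨1, ?_⟩
  rintro _ ⟨t, rfl⟩
  exact abs_empDist_sub_le_one X n t ω

lemma empSup_eq (hX : IsStdGaussianProcess P X) {n : ℕ} (hn : 1 ≤ n) (ω : Ω) :
    empSup P X n ω = ⨆ t : ℝ, |empDist X n t ω - gcdf t| := by
  unfold empSup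
  congr 1
  funext t
  rw [integral_empDist P X hX t hn]

lemma abs_le_empSup (hX : IsStdGaussianProcess P X) {n : ℕ} (hn : 1 ≤ n) (t : ℝ) (ω : Ω) :
    |empDist X n t ω - gcdf t| ≤ empSup P X n ω := by
  rw [empSup_eq P X hX hn ω]
  exact le_ciSup (bddAbove_empDist X n ω) t

lemma empSup_nonneg (hX : IsStdGaussianProcess P X) {n : ℕ} (hn : 1 ≤ n) (ω : Ω) :
    0 ≤ empSup P X n ω :=
  le_trans (abs_nonneg _) (abs_le_empSup P X hX hn 0 ω)

lemma empSup_chain (hX : IsStdGaussianProcess P X) {m n M : ℕ} (hm : 1 ≤ m) (hmn : m ≤ n)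
    (hnM : n ≤ M) (ω : Ω) :
    empSup P X n ω ≤ ((M:ℝ)/m) * (empSup P X M ω + empSup P X m ω) + 2 * ((M:ℝ)/m - 1) := by
  have hn : 1 ≤ n := hm.trans hmn
  have hM : 1 ≤ M := hn.trans hnM
  have hmR : (1:ℝ) ≤ m := by exact_mod_cast hm
  have hmnR : (m:ℝ) ≤ n := by exact_mod_cast hmn
  have hnMR : (n:ℝ) ≤ M := by exact_mod_cast hnM
  have hmpos : (0:ℝ) < m := by linarith
  have hnpos : (0:ℝ) < n := by linarith
  rw [empSup_eq P X hX hn ω]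
  apply ciSup_le
  intro t
  set a := empDist X n t ω with ha
  set b := empDist X M t ω with hb
  set c := empDist X m t ω with hc
  set g := gcdf t with hg
  set SM := empSup P X M ω with hSM
  set Sm := empSup P X m ω with hSm
  have h1 : (n:ℝ) * a ≤ (M:ℝ) * b := count_mono X hn hnM t ω
  have h2 : (m:ℝ) * c ≤ (n:ℝ) * a := count_mono X hm hmn t ω
  have hbg : b - g ≤ SM := le_trans (le_abs_self _) (abs_le_empSup P X hX hM t ω)
  have hgc : g - c ≤ Sm := by
    have h' : |c - g| ≤ Sm := abs_le_empSup P X hX hm t ω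
    have := (abs_le.mp h').1
    linarith
  have hSM0 : 0 ≤ SM := empSup_nonneg P X hX hM ω
  have hSm0 : 0 ≤ Sm := empSup_nonneg P X hX hm ω
  have hg0 : 0 ≤ g := gcdf_nonneg t
  have hg1 : g ≤ 1 := gcdf_le_one t
  have key : (n:ℝ) * |a - g| ≤ (M:ℝ) * (SM + Sm) + 2 * ((M:ℝ) - m) := by
    have f1 : (M:ℝ) * (b - g) ≤ (M:ℝ) * SM := by nlinarith
    have f3 : (m:ℝ) * (g - c) ≤ (m:ℝ) * Sm := by nlinarith
    rcases abs_cases (a - g) with ⟨h, _⟩ | ⟨h, _⟩ <;> rw [h] <;> nlinarith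
  have h3 : |a - g| ≤ ((M:ℝ) * (SM + Sm) + 2 * ((M:ℝ) - m)) / n := by
    rw [le_div_iff₀ hnpos]
    linarith [key]
  have hnum : (0:ℝ) ≤ (M:ℝ) * (SM + Sm) + 2 * ((M:ℝ) - m) := by nlinarith
  have h4 : ((M:ℝ) * (SM + Sm) + 2 * ((M:ℝ) - m)) / n
      ≤ ((M:ℝ) * (SM + Sm) + 2 * ((M:ℝ) - m)) / m :=
    div_le_div_of_nonneg_left hnum hmpos hmnR
  have h5 : ((M:ℝ) * (SM + Sm) + 2 * ((M:ℝ) - m)) / m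
      = ((M:ℝ)/m) * (SM + Sm) + 2 * ((M:ℝ)/m - 1) := by
    field_simp
  linarith

end Aux
lemma rpow_third_add_le {x y : ℝ} (hx : 0 ≤ x) (hy : 0 ≤ y) :
    (x + y) ^ ((1:ℝ)/3) ≤ x ^ ((1:ℝ)/3) + y ^ ((1:ℝ)/3) := by
  rw [← Real.coe_toNNReal x hx, ← Real.coe_toNNReal y hy, ← NNReal.coe_add,
    ← NNReal.coe_rpow, ← NNReal.coe_rpow, ← NNReal.coe_rpow, ← NNReal.coe_add, NNReal.coe_le_coe]
  exact NNReal.rpow_add_le_add_rpow _ _ (by norm_num) (by norm_num)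

lemma depMeasure_nonneg {Ω : Type*} [MeasurableSpace Ω] (P : Measure Ω) (X : ℕ → Ω → ℝ)
    (n : ℕ) : 0 ≤ depMeasure P X n := by
  unfold depMeasure
  positivity

/-- (a) if for every `γ > 1` and `ε > 0` the series
`∑ᵢ P(D_{⌊γ^i⌋} > ε)` converges, then `Dₙ → 0` a.s.; (b) the condition
`∑ᵢ ((⌊γ^i⌋ + Δ(⌊γ^i⌋))/⌊γ^i⌋²)^{1/3} < ∞` for all `γ > 1` is equivalent to
`∑ᵢ (Δ(⌊γ^i⌋)/⌊γ^i⌋²)^{1/3} < ∞` for all `γ > 1`. -/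
theorem empSup_tendsto_ae_of_summable_prob {Ω : Type*} [MeasurableSpace Ω]
    (P : Measure Ω) [IsProbabilityMeasure P] (X : ℕ → Ω → ℝ)
    (hX : IsStdGaussianProcess P X) :
    ((∀ γ : ℝ, 1 < γ → ∀ ε > (0 : ℝ),
        (∑' i : ℕ, P {ω | ε < empSup P X ⌊γ ^ (i + 1)⌋₊ ω}) ≠ ⊤) →
      ∀ᵐ ω ∂P, Tendsto (fun n : ℕ => empSup P X n ω) atTop (nhds 0)) ∧
    ((∀ γ : ℝ, 1 < γ → Summable (fun i : ℕ =>
        (((⌊γ ^ (i + 1)⌋₊ : ℝ) + depMeasure P X ⌊γ ^ (i + 1)⌋₊) /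
          (⌊γ ^ (i + 1)⌋₊ : ℝ) ^ 2) ^ ((1 : ℝ) / 3))) ↔
      ∀ γ : ℝ, 1 < γ → Summable (fun i : ℕ =>
        (depMeasure P X ⌊γ ^ (i + 1)⌋₊ / (⌊γ ^ (i + 1)⌋₊ : ℝ) ^ 2) ^ ((1 : ℝ) / 3))) := by
  constructor
  · -- part (a)
    intro h
    have hγk : ∀ k : ℕ, (1:ℝ) < 1 + 1/((k:ℝ)+1) := fun k => by
      have : (0:ℝ) < 1/((k:ℝ)+1) := by positivity
      linarith
    have hQ : ∀ᵐ ω ∂P, ∀ k j : ℕ, ∀ᶠ i in atTop,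
        empSup P X ⌊(1 + 1/((k:ℝ)+1)) ^ (i + 1)⌋₊ ω ≤ 1/((j:ℝ)+1) := by
      rw [ae_all_iff]
      intro k
      rw [ae_all_iff]
      intro j
      have hbc := ae_eventually_notMem
        (h (1 + 1/((k:ℝ)+1)) (hγk k) (1/((j:ℝ)+1)) (by positivity))
      filter_upwards [hbc] with ω hω
      filter_upwards [hω] with i hi
      simpa [not_lt] using hi
    filter_upwards [hQ] with ω hω
    rw [Metric.tendsto_atTop]
    intro ε hε
    set δ := min ε 1 with hδdef
    have hδ0 : 0 < δ := lt_min hε one_pos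
    have hδ1 : δ ≤ 1 := min_le_right _ _
    have hδε : δ ≤ ε := min_le_left _ _
    obtain ⟨k, hk⟩ := exists_nat_one_div_lt (show (0:ℝ) < δ/32 by positivity)
    obtain ⟨j, hj⟩ := exists_nat_one_div_lt (show (0:ℝ) < δ/16 by positivity)
    set u : ℝ := 1/((k:ℝ)+1) with hu
    set γ : ℝ := 1 + u with hγdef
    have hu0 : 0 < u := by positivity
    have hγ : 1 < γ := hγk k
    have hγ0 : (0:ℝ) < γ := by linarith
    set ns : ℕ → ℕ := fun i => ⌊γ ^ (i + 1)⌋₊ with hns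
    have hns1 : ∀ i, 1 ≤ ns i := fun i => Nat.le_floor (by exact_mod_cast one_le_pow₀ hγ.le)
    have hnsmono : ∀ ⦃i₁ i₂ : ℕ⦄, i₁ ≤ i₂ → ns i₁ ≤ ns i₂ := fun i₁ i₂ h12 =>
      Nat.floor_le_floor (pow_le_pow_right₀ hγ.le (by omega))
    have hnspos : ∀ i, (0:ℝ) < (ns i : ℝ) := fun i => by
      exact_mod_cast Nat.cast_pos.mpr (hns1 i)
    have ht : Tendsto (fun i : ℕ => γ ^ (i+1)) atTop atTop :=
      (tendsto_pow_atTop_atTop_of_one_lt hγ).comp (tendsto_add_atTop_nat 1)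
    have hrat : ∀ᶠ i : ℕ in atTop, (ns (i+1) : ℝ) ≤ γ^2 * (ns i : ℝ) := by
      filter_upwards [ht.eventually_ge_atTop (γ/(γ-1))] with i hi
      have hfl : γ^(i+1) - 1 ≤ (ns i : ℝ) := by
        have h1 := Nat.lt_floor_add_one (γ^(i+1))
        have : (ns i : ℝ) = (⌊γ^(i+1)⌋₊ : ℝ) := by rw [hns]
        linarith
      have hfu : (ns (i+1) : ℝ) ≤ γ^(i+1+1) := by
        rw [hns]
        exact Nat.floor_le (by positivity)
      have hγ1 : (0:ℝ) < γ - 1 := by linarith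
      have hkey : γ ≤ γ^(i+1) * (γ - 1) := by
        rw [div_le_iff₀ hγ1] at hi
        linarith
      have hstep : γ^(i+1+1) ≤ γ^2 * (γ^(i+1) - 1) := by
        have hp : γ^(i+1+1) = γ^(i+1) * γ := by ring
        nlinarith [pow_pos hγ0 (i+1)]
      nlinarith [mul_le_mul_of_nonneg_left hfl (by positivity : (0:ℝ) ≤ γ^2)]
    obtain ⟨I0, hI0⟩ := eventually_atTop.mp (hω k j)
    obtain ⟨I1, hI1⟩ := eventually_atTop.mp hrat
    set I := max I0 I1 with hI
    refine ⟨ns I, fun n hn => ?_⟩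
    have hex : ∃ jj : ℕ, n < ns jj := by
      obtain ⟨jj, hjj⟩ := (ht.eventually_ge_atTop ((n:ℝ)+1)).exists
      refine ⟨jj, ?_⟩
      have : (n+1 : ℕ) ≤ ns jj := Nat.le_floor (by push_cast; linarith)
      omega
    set J := Nat.find hex with hJ
    have hJspec : n < ns J := Nat.find_spec hex
    have hIJ : I < J := by
      by_contra hcon
      push_neg at hcon
      have h1 : ns J ≤ ns I := hnsmono hcon
      omega
    set i := J - 1 with hidef
    have hi1 : i + 1 = J := by omega
    have hle : ns i ≤ n := by
      have := Nat.find_min hex (show i < J by omega)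
      omega
    have hlt : n < ns (i+1) := by rw [hi1]; exact hJspec
    have hiI : I ≤ i := by omega
    have hch := empSup_chain P X hX (hns1 i) hle hlt.le ω
    have hd1 : empSup P X (ns i) ω ≤ 1/((j:ℝ)+1) := hI0 i (le_trans (le_max_left _ _) hiI)
    have hd2 : empSup P X (ns (i+1)) ω ≤ 1/((j:ℝ)+1) :=
      hI0 (i+1) (le_trans (le_trans (le_max_left _ _) hiI) (Nat.le_succ i))
    have hr := hI1 i (le_trans (le_max_right _ _) hiI)
    have hdm0 : 0 ≤ empSup P X (ns i) ω := empSup_nonneg P X hX (hns1 i) ω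
    have hdM0 : 0 ≤ empSup P X (ns (i+1)) ω := empSup_nonneg P X hX (hns1 (i+1)) ω
    have hdn0 : 0 ≤ empSup P X n ω := empSup_nonneg P X hX (le_trans (hns1 i) hle) ω
    rw [Real.dist_eq, sub_zero, abs_of_nonneg hdn0]
    set r : ℝ := (ns (i+1) : ℝ) / (ns i : ℝ) with hrdef
    have hratio_le : r ≤ γ^2 := by
      rw [hrdef, div_le_iff₀ (hnspos i)]
      linarith [hr]
    have hratio_ge : (1:ℝ) ≤ r := by
      rw [hrdef, le_div_iff₀ (hnspos i), one_mul]
      exact_mod_cast hnsmono (Nat.le_succ i)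
    have hu1 : u ≤ 1 := by
      rw [hu]
      rw [div_le_one (by positivity)]
      linarith [Nat.cast_nonneg (α := ℝ) k]
    have hγ2 : γ^2 ≤ 1 + 3*u := by nlinarith
    have hr2 : r ≤ 2 := by linarith
    set A := empSup P X (ns (i+1)) ω
    set B := empSup P X (ns i) ω
    have hAB : A + B ≤ δ/8 := by linarith
    have h5 : r*(A+B) ≤ 2*(δ/8) :=
      le_trans (mul_le_mul_of_nonneg_right hr2 (by linarith)) (by linarith)
    have h6 : 2*(r-1) ≤ 6*u := by linarith
    calc empSup P X n ω ≤ r * (A + B) + 2*(r-1) := hch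
      _ < ε := by linarith
  · -- part (b)
    constructor
    · intro h γ hγ
      have hγ1 : (1:ℝ) ≤ γ := hγ.le
      have hns : ∀ i : ℕ, 1 ≤ ⌊γ^(i+1)⌋₊ := fun i =>
        Nat.le_floor (by exact_mod_cast one_le_pow₀ hγ1)
      refine Summable.of_nonneg_of_le (fun i => ?_) (fun i => ?_) (h γ hγ)
      · have hΔ := depMeasure_nonneg P X ⌊γ^(i+1)⌋₊
        positivity
      · have hΔ := depMeasure_nonneg P X ⌊γ^(i+1)⌋₊
        apply Real.rpow_le_rpow (by positivity) ?_ (by norm_num)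
        have h0 : (0:ℝ) < (⌊γ^(i+1)⌋₊ : ℝ) := by exact_mod_cast Nat.cast_pos.mpr (hns i)
        have hpos : (0:ℝ) < (⌊γ^(i+1)⌋₊:ℝ)^2 := by positivity
        exact (div_le_div_iff_of_pos_right hpos).mpr (le_add_of_nonneg_left (by positivity))
    · intro h γ hγ
      have hγ0 : (0:ℝ) < γ := by linarith
      have hγ1 : (1:ℝ) ≤ γ := hγ.le
      have hns : ∀ i : ℕ, 1 ≤ ⌊γ^(i+1)⌋₊ := fun i =>
        Nat.le_floor (by exact_mod_cast one_le_pow₀ hγ1)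
      have hnpos : ∀ i : ℕ, (0:ℝ) < (⌊γ^(i+1)⌋₊ : ℝ) := fun i => by
        exact_mod_cast Nat.cast_pos.mpr (hns i)
      set ρ : ℝ := (γ ^ ((1:ℝ)/3))⁻¹ with hρ
      have hρ0 : 0 ≤ ρ := by positivity
      have hρ1 : ρ < 1 := by
        apply inv_lt_one_of_one_lt₀
        rw [Real.one_lt_rpow_iff_of_pos hγ0]
        left
        exact ⟨hγ, by norm_num⟩
      have hgeo : Summable (fun i : ℕ => ((2:ℝ)^((1:ℝ)/3) * ρ) * ρ ^ i) :=
        (summable_geometric_of_lt_one hρ0 hρ1).mul_left _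
      have hterm : ∀ i : ℕ, (1/(⌊γ^(i+1)⌋₊ : ℝ)) ^ ((1:ℝ)/3) ≤ ((2:ℝ)^((1:ℝ)/3) * ρ) * ρ ^ i := by
        intro i
        have h2n : γ ^ (i+1) ≤ 2 * (⌊γ^(i+1)⌋₊ : ℝ) := by
          have hlt := Nat.lt_floor_add_one (γ ^ (i+1))
          have h1 : (1:ℝ) ≤ (⌊γ^(i+1)⌋₊ : ℝ) := by exact_mod_cast hns i
          linarith
        have hppos : (0:ℝ) < γ ^ (i+1) := by positivity
        have step1 : (1/(⌊γ^(i+1)⌋₊ : ℝ)) ^ ((1:ℝ)/3) ≤ (2 / γ^(i+1)) ^ ((1:ℝ)/3) := by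
          apply Real.rpow_le_rpow (by positivity) ?_ (by norm_num)
          rw [div_le_div_iff₀ (hnpos i) hppos]
          linarith
        have hnp : (γ^(i+1))^((1:ℝ)/3) = (γ^((1:ℝ)/3))^(i+1) := by
          rw [← Real.rpow_natCast γ (i+1), ← Real.rpow_mul hγ0.le, mul_comm,
            Real.rpow_mul hγ0.le, Real.rpow_natCast]
        have step2 : (2 / γ^(i+1) : ℝ) ^ ((1:ℝ)/3) = ((2:ℝ)^((1:ℝ)/3) * ρ) * ρ ^ i := by
          rw [Real.div_rpow (by norm_num) (by positivity), hnp, div_eq_mul_inv, hρ, ← inv_pow]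
          ring
        linarith [step1, le_of_eq step2]
      have hsum1 : Summable (fun i : ℕ => (1/(⌊γ^(i+1)⌋₊ : ℝ)) ^ ((1:ℝ)/3)) :=
        Summable.of_nonneg_of_le (fun i => by positivity) hterm hgeo
      refine Summable.of_nonneg_of_le (fun i => ?_) (fun i => ?_) (hsum1.add (h γ hγ))
      · have hΔ := depMeasure_nonneg P X ⌊γ^(i+1)⌋₊
        positivity
      · have hΔ := depMeasure_nonneg P X ⌊γ^(i+1)⌋₊
        have h0 : (0:ℝ) < (⌊γ^(i+1)⌋₊ : ℝ) := hnpos i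
        have hsplit : ((⌊γ^(i+1)⌋₊:ℝ) + depMeasure P X ⌊γ^(i+1)⌋₊) / (⌊γ^(i+1)⌋₊:ℝ)^2
            = 1/(⌊γ^(i+1)⌋₊:ℝ) + depMeasure P X ⌊γ^(i+1)⌋₊ / (⌊γ^(i+1)⌋₊:ℝ)^2 := by
          field_simp
        rw [hsplit]
        exact rpow_third_add_le (by positivity) (by positivity)
end

section
/- Fix 0 < ε < 1/2 and define ℓ: ℝ → ℝ by ℓ(−1/2) = 0 and ℓ'(x) = (ε − |x|)⁺/ε². Then ℓ(x − ε) ≤ 1(x ≥ 0) ≤ ℓ(x + ε) for all x, the functional D(ℓ) = (∫_{−1}^{2} [ ∫_0^1 (ℓ'(t−y))² dy − (∫_0^1 ℓ'(t−y) dy)² ] dt)^{1/2} satisfies D(ℓ) ≤ √(2/ε), and sup_t |∫_0^1 ℓ(t−y) dy − ∫_0^1 1(t−y ≥ 0) dy| ≤ ε. -/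
/-!
`tent ε` is a probability density on `[-ε, ε]` bounded by `1/ε`, and `ℓ` is its distribution
function: `0` left of `-ε`, `1` right of `ε`, and a quadratic on each half of `[-ε, ε]`. This gives
the squeeze, and the pointwise bound `|ℓ u - 1(u ≥ 0)| ≤ (ε/2) tent ε u`, which integrates in `y`
to `(ε/2) (ℓ t - ℓ (t - 1)) ≤ ε/2`. For `D(ℓ)`, drop the squared mean and use `tent² ≤ tent / ε`:
the integrand is at most `(ℓ t - ℓ (t - 1)) / ε`, whose integral over `[-1, 2]` telescopes to
`(∫_1^2 ℓ - ∫_{-2}^{-1} ℓ) / ε = 1 / ε`.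
-/

open MeasureTheory

noncomputable def tent (ε x : ℝ) : ℝ := max (ε - |x|) 0 / ε ^ 2

section Tent

variable {ε : ℝ}

@[fun_prop]
theorem continuous_tent (ε : ℝ) : Continuous (tent ε) :=
  ((continuous_const.sub continuous_abs).max continuous_const).div_const _

theorem tent_nonneg (ε x : ℝ) : 0 ≤ tent ε x :=
  div_nonneg (le_max_right _ _) (sq_nonneg ε)

theorem tent_le_inv (hε : 0 < ε) (x : ℝ) : tent ε x ≤ ε⁻¹ := by
  calc tent ε x ≤ ε / ε ^ 2 := by
        unfold tent; gcongr; exact max_le (by linarith [abs_nonneg x]) hε.le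
    _ = ε⁻¹ := by field_simp

theorem tent_neg (ε x : ℝ) : tent ε (-x) = tent ε x := by
  rw [tent, abs_neg, tent]

theorem tent_of_abs_le {x : ℝ} (hx : |x| ≤ ε) : tent ε x = (ε - |x|) / ε ^ 2 := by
  rw [tent, max_eq_left (by linarith)]

theorem integral_tent_eq_zero {a b : ℝ} (h : ∀ x ∈ Set.uIcc a b, ε ≤ |x|) :
    ∫ x in a..b, tent ε x = 0 := by
  refine (intervalIntegral.integral_congr fun x hx => ?_).trans intervalIntegral.integral_zero
  rw [tent, max_eq_right (by linarith [h x hx]), zero_div]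

theorem integral_tent_of_nonpos (hε : 0 < ε) {u : ℝ} (hu : -ε ≤ u) (hu0 : u ≤ 0) :
    ∫ x in -ε..u, tent ε x = (ε + u) ^ 2 / (2 * ε ^ 2) := by
  have hlin : Set.EqOn (tent ε) (fun x => (ε + x) / ε ^ 2) (Set.uIcc (-ε) u) := by
    intro x hx
    rw [Set.uIcc_of_le hu] at hx
    rw [tent_of_abs_le (abs_le.2 ⟨hx.1, by linarith [hx.2]⟩), abs_of_nonpos (hx.2.trans hu0),
      sub_neg_eq_add]
  rw [intervalIntegral.integral_congr hlin, intervalIntegral.integral_div,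
    intervalIntegral.integral_comp_add_left (fun x => x), integral_id]
  field_simp
  ring

theorem integral_tent_of_nonneg (hε : 0 < ε) {u : ℝ} (hu0 : 0 ≤ u) (hu : u ≤ ε) :
    ∫ x in u..ε, tent ε x = (ε - u) ^ 2 / (2 * ε ^ 2) := by
  have := integral_tent_of_nonpos hε (u := -u) (by linarith) (by linarith)
  simpa only [← intervalIntegral.integral_comp_neg, neg_neg, tent_neg, ← sub_eq_add_neg] using this

theorem integral_tent (hε : 0 < ε) : ∫ x in -ε..ε, tent ε x = 1 := by
  have hint := fun a b => (continuous_tent ε).intervalIntegrable (μ := volume) a b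
  rw [← intervalIntegral.integral_add_adjacent_intervals (hint _ 0) (hint 0 _),
    integral_tent_of_nonpos hε (by linarith) le_rfl, integral_tent_of_nonneg hε le_rfl hε.le]
  field_simp
  ring

end Tent

theorem integral_sq_le_mul_integral {f : ℝ → ℝ} {M a b : ℝ} (hab : a ≤ b) (hf : Continuous f)
    (hf0 : ∀ x, 0 ≤ f x) (hfM : ∀ x, f x ≤ M) :
    ∫ x in a..b, f x ^ 2 ≤ M * ∫ x in a..b, f x := by
  rw [← intervalIntegral.integral_const_mul]
  refine intervalIntegral.integral_mono_on hab ((hf.pow 2).intervalIntegrable _ _)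
    ((continuous_const.mul hf).intervalIntegrable _ _) fun x _ => ?_
  rw [sq]
  exact mul_le_mul_of_nonneg_right (hfM x) (hf0 x)

theorem integral_comp_sub_sq_sub_sq_le {φ ℓ : ℝ → ℝ} {M : ℝ} (hφ : Continuous φ)
    (hφ0 : ∀ x, 0 ≤ φ x) (hφM : ∀ x, φ x ≤ M) (hℓ : ∀ x, HasDerivAt ℓ (φ x) x) (t : ℝ) :
    (∫ y in 0..1, φ (t - y) ^ 2) - (∫ y in 0..1, φ (t - y)) ^ 2 ≤ M * (ℓ t - ℓ (t - 1)) := by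
  have hprim : ∫ y in 0..1, φ (t - y) = ℓ t - ℓ (t - 1) := by
    rw [intervalIntegral.integral_comp_sub_left φ t, sub_zero,
      intervalIntegral.integral_eq_sub_of_hasDerivAt (fun x _ => hℓ x) (hφ.intervalIntegrable _ _)]
  have hsq := integral_sq_le_mul_integral (f := fun y => φ (t - y)) zero_le_one (by fun_prop)
    (fun y => hφ0 (t - y)) (fun y => hφM (t - y))
  rw [← hprim]
  nlinarith [sq_nonneg (∫ y in 0..1, φ (t - y))]

theorem integral_sub_comp_sub {g : ℝ → ℝ} (hg : Continuous g) (a b c : ℝ) :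
    ∫ t in a..b, (g t - g (t - c)) = (∫ t in b - c..b, g t) - ∫ t in a - c..a, g t := by
  have hint := fun a b => hg.intervalIntegrable (μ := volume) a b
  have hshift : IntervalIntegrable (fun t => g (t - c)) volume a b :=
    (hg.comp (continuous_sub_right c)).intervalIntegrable a b
  rw [intervalIntegral.integral_sub (hint a b) hshift,
    intervalIntegral.integral_comp_sub_right g c,
    intervalIntegral.integral_interval_sub_interval_comm' (hint _ _) (hint _ _) (hint _ _)]

namespace TentPrimitive

variable {ε : ℝ} {ℓ : ℝ → ℝ} {u : ℝ}

theorem integral_eq_sub (hℓ : ∀ x, HasDerivAt ℓ (tent ε x) x) (a b : ℝ) :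
    ∫ x in a..b, tent ε x = ℓ b - ℓ a :=
  intervalIntegral.integral_eq_sub_of_hasDerivAt (fun x _ => hℓ x)
    ((continuous_tent ε).intervalIntegrable a b)

theorem continuous (hℓ : ∀ x, HasDerivAt ℓ (tent ε x) x) : Continuous ℓ :=
  continuous_iff_continuousAt.2 fun x => (hℓ x).continuousAt

theorem monotone (hℓ : ∀ x, HasDerivAt ℓ (tent ε x) x) : Monotone ℓ :=
  monotone_of_hasDerivAt_nonneg hℓ (tent_nonneg ε)

theorem eq_of_le_neg (hℓ : ∀ x, HasDerivAt ℓ (tent ε x) x) (hu : u ≤ -ε) : ℓ u = ℓ (-ε) := by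
  have := integral_eq_sub hℓ u (-ε)
  rw [integral_tent_eq_zero fun x hx => ?_] at this
  · linarith
  · rw [Set.uIcc_of_le hu] at hx
    exact (le_neg.1 hx.2).trans (neg_le_abs x)

theorem eq_of_ge (hℓ : ∀ x, HasDerivAt ℓ (tent ε x) x) (hu : ε ≤ u) : ℓ u = ℓ ε := by
  have := integral_eq_sub hℓ ε u
  rw [integral_tent_eq_zero fun x hx => ?_] at this
  · linarith
  · rw [Set.uIcc_of_le hu] at hx
    exact hx.1.trans (le_abs_self x)

theorem eq_zero_of_le_neg (hℓ : ∀ x, HasDerivAt ℓ (tent ε x) x) (h0 : ℓ (-ε) = 0)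
    (hu : u ≤ -ε) : ℓ u = 0 :=
  (eq_of_le_neg hℓ hu).trans h0

theorem eq_of_nonpos (hε : 0 < ε) (hℓ : ∀ x, HasDerivAt ℓ (tent ε x) x) (h0 : ℓ (-ε) = 0)
    (hu : -ε ≤ u) (hu0 : u ≤ 0) : ℓ u = (ε + u) ^ 2 / (2 * ε ^ 2) := by
  rw [← integral_tent_of_nonpos hε hu hu0, integral_eq_sub hℓ, h0, sub_zero]

theorem eq_one (hε : 0 < ε) (hℓ : ∀ x, HasDerivAt ℓ (tent ε x) x) (h0 : ℓ (-ε) = 0) :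
    ℓ ε = 1 := by
  rw [← sub_zero (ℓ ε), ← h0, ← integral_eq_sub hℓ, integral_tent hε]

theorem eq_of_nonneg (hε : 0 < ε) (hℓ : ∀ x, HasDerivAt ℓ (tent ε x) x) (h0 : ℓ (-ε) = 0)
    (hu0 : 0 ≤ u) (hu : u ≤ ε) : ℓ u = 1 - (ε - u) ^ 2 / (2 * ε ^ 2) := by
  rw [← integral_tent_of_nonneg hε hu0 hu, integral_eq_sub hℓ, eq_one hε hℓ h0, sub_sub_cancel]

theorem eq_one_of_ge (hε : 0 < ε) (hℓ : ∀ x, HasDerivAt ℓ (tent ε x) x) (h0 : ℓ (-ε) = 0)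
    (hu : ε ≤ u) : ℓ u = 1 :=
  (eq_of_ge hℓ hu).trans (eq_one hε hℓ h0)

theorem mem_Icc (hε : 0 < ε) (hℓ : ∀ x, HasDerivAt ℓ (tent ε x) x) (h0 : ℓ (-ε) = 0)
    (u : ℝ) : ℓ u ∈ Set.Icc 0 1 := by
  constructor
  · rw [← eq_zero_of_le_neg hℓ h0 (min_le_right u (-ε))]
    exact monotone hℓ (min_le_left _ _)
  · rw [← eq_one_of_ge hε hℓ h0 (le_max_right u ε)]
    exact monotone hℓ (le_max_left _ _)

theorem abs_sub_step_le (hε : 0 < ε) (hℓ : ∀ x, HasDerivAt ℓ (tent ε x) x) (h0 : ℓ (-ε) = 0)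
    (u : ℝ) : |ℓ u - (if 0 ≤ u then 1 else 0)| ≤ ε / 2 * tent ε u := by
  rcases le_or_gt u (-ε) with hu | hu
  · rw [eq_zero_of_le_neg hℓ h0 hu, if_neg (by linarith), sub_zero, abs_zero]
    exact mul_nonneg (by positivity) (tent_nonneg ε u)
  rcases le_or_gt ε u with hu' | hu'
  · rw [eq_one_of_ge hε hℓ h0 hu', if_pos (by linarith), sub_self, abs_zero]
    exact mul_nonneg (by positivity) (tent_nonneg ε u)
  rw [tent_of_abs_le (abs_le.2 ⟨hu.le, hu'.le⟩)]
  suffices |ℓ u - (if 0 ≤ u then 1 else 0)| = (ε - |u|) ^ 2 / (2 * ε ^ 2) by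
    rw [this, div_le_iff₀ (by positivity)]
    field_simp
    nlinarith [abs_nonneg u, abs_lt.2 ⟨hu, hu'⟩]
  rcases lt_or_ge u 0 with hu0 | hu0
  · rw [eq_of_nonpos hε hℓ h0 hu.le hu0.le, if_neg hu0.not_ge, sub_zero, abs_of_neg hu0,
      abs_of_nonneg (by positivity)]
    ring
  · rw [eq_of_nonneg hε hℓ h0 hu0 hu'.le, if_pos hu0, abs_of_nonneg hu0, sub_sub_cancel_left,
      abs_neg, abs_of_nonneg (by positivity)]

theorem integral_variance_le (hε : 0 < ε) (hε1 : ε ≤ 1) (hℓ : ∀ x, HasDerivAt ℓ (tent ε x) x)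
    (h0 : ℓ (-ε) = 0) :
    ∫ t in (-1)..2, ((∫ y in 0..1, tent ε (t - y) ^ 2) - (∫ y in 0..1, tent ε (t - y)) ^ 2) ≤
      ε⁻¹ := by
  have hone : ∫ t in (1 : ℝ)..2, ℓ t = 1 := by
    rw [intervalIntegral.integral_congr (g := fun _ => 1) fun x hx => ?_]
    · norm_num
    · rw [Set.uIcc_of_le (by norm_num)] at hx
      exact eq_one_of_ge hε hℓ h0 (hε1.trans hx.1)
  have hzero : ∫ t in (-2 : ℝ)..(-1), ℓ t = 0 := by
    rw [intervalIntegral.integral_congr (g := fun _ => 0) fun x hx => ?_]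
    · norm_num
    · rw [Set.uIcc_of_le (by norm_num)] at hx
      exact eq_zero_of_le_neg hℓ h0 (by linarith [hx.2])
  have hℓc := continuous hℓ
  calc _ ≤ ∫ t in (-1)..2, ε⁻¹ * (ℓ t - ℓ (t - 1)) := by
        refine intervalIntegral.integral_mono_on (by norm_num) ?_ ?_ fun t _ =>
          integral_comp_sub_sq_sub_sq_le (continuous_tent ε) (tent_nonneg ε) (tent_le_inv hε) hℓ t
        · exact Continuous.intervalIntegrable (by fun_prop) _ _
        · exact Continuous.intervalIntegrable (by fun_prop) _ _
    _ = ε⁻¹ := by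
        rw [intervalIntegral.integral_const_mul, integral_sub_comp_sub hℓc]
        norm_num [hone, hzero]

theorem abs_integral_sub_integral_step_le (hε : 0 < ε) (hℓ : ∀ x, HasDerivAt ℓ (tent ε x) x)
    (h0 : ℓ (-ε) = 0) (t : ℝ) :
    |(∫ y in 0..1, ℓ (t - y)) - ∫ y in 0..1, (if 0 ≤ t - y then 1 else 0)| ≤ ε / 2 := by
  have hℓc := continuous hℓ
  have hstep : IntervalIntegrable (fun y : ℝ => if 0 ≤ t - y then (1 : ℝ) else 0) volume 0 1 := by
    refine Antitone.intervalIntegrable fun a b hab => ?_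
    split_ifs <;> linarith
  rw [← intervalIntegral.integral_sub (Continuous.intervalIntegrable (by fun_prop) _ _) hstep,
    ← Real.norm_eq_abs]
  have hℓt := (mem_Icc hε hℓ h0 t).2
  have hℓt' := (mem_Icc hε hℓ h0 (t - 1)).1
  calc _ ≤ ∫ y in 0..1, ε / 2 * tent ε (t - y) :=
        intervalIntegral.norm_integral_le_of_norm_le zero_le_one
          (ae_of_all _ fun y _ => abs_sub_step_le hε hℓ h0 (t - y))
          (Continuous.intervalIntegrable (by fun_prop) _ _)
    _ = ε / 2 * (ℓ t - ℓ (t - 1)) := by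
        rw [intervalIntegral.integral_const_mul, intervalIntegral.integral_comp_sub_left (tent ε),
          sub_zero, integral_eq_sub hℓ]
    _ ≤ ε / 2 := by nlinarith

end TentPrimitive

/-- for `0 < ε < 1/2` and `ℓ` with `ℓ(-1/2) = 0` and
`ℓ'(x) = (ε - |x|)⁺/ε²`, one has the squeeze `ℓ(x-ε) ≤ 1(x ≥ 0) ≤ ℓ(x+ε)`, the bound
`D(ℓ) ≤ √(2/ε)`, and `sup_t |∫_0^1 ℓ(t-y) dy - ∫_0^1 1(t-y ≥ 0) dy| ≤ ε`. -/
theorem mollifier_properties (ε : ℝ) (hε0 : 0 < ε) (hε : ε < 1 / 2) (ℓ : ℝ → ℝ)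
    (hbase : ℓ (-(1 / 2)) = 0)
    (hderiv : ∀ x : ℝ, HasDerivAt ℓ (max (ε - |x|) 0 / ε ^ 2) x) :
    (∀ x : ℝ, ℓ (x - ε) ≤ (if 0 ≤ x then (1 : ℝ) else 0)) ∧
    (∀ x : ℝ, (if 0 ≤ x then (1 : ℝ) else 0) ≤ ℓ (x + ε)) ∧
    Real.sqrt (∫ t in (-1 : ℝ)..2,
        ((∫ y in (0 : ℝ)..1, (max (ε - |t - y|) 0 / ε ^ 2) ^ 2) -
          (∫ y in (0 : ℝ)..1, max (ε - |t - y|) 0 / ε ^ 2) ^ 2)) ≤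
      Real.sqrt (2 / ε) ∧
    ∀ t : ℝ, |(∫ y in (0 : ℝ)..1, ℓ (t - y)) -
        ∫ y in (0 : ℝ)..1, (if 0 ≤ t - y then (1 : ℝ) else 0)| ≤ ε := by
  have hℓ : ∀ x, HasDerivAt ℓ (tent ε x) x := hderiv
  have h0 : ℓ (-ε) = 0 := (TentPrimitive.eq_of_le_neg hℓ (by linarith)).symm.trans hbase
  refine ⟨fun x => ?_, fun x => ?_, ?_, fun t => ?_⟩
  · split_ifs with hx
    · exact (TentPrimitive.mem_Icc hε0 hℓ h0 _).2
    · exact (TentPrimitive.eq_zero_of_le_neg hℓ h0 (by linarith)).le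
  · split_ifs with hx
    · exact (TentPrimitive.eq_one_of_ge hε0 hℓ h0 (by linarith)).ge
    · exact (TentPrimitive.mem_Icc hε0 hℓ h0 _).1
  · refine Real.sqrt_le_sqrt ((TentPrimitive.integral_variance_le hε0 (by linarith) hℓ h0).trans ?_)
    rw [inv_eq_one_div]
    gcongr
    norm_num
  · linarith [TentPrimitive.abs_integral_sub_integral_step_le hε0 hℓ h0 t]
end
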